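/- Let (P_n) be a family of polynomials of the form P_n(X) = ∏_{i=1}^{N_n} (X^i − 1) for a sequence of positive integers (N_n). Suppose that for every n the polynomial P_n can be written in the form ∑_{j=0}^{t_n} c_j^{(n)} X^{α_j^{(n)}}(a_n + b_n X)^{β_j^{(n)}} with a_n, b_n, c_j^{(n)} ∈ ℚ, where t_n and the bit sizes of all the c_j^{(n)}, α_j^{(n)} and β_j^{(n)} are bounded above by a polynomial in n (there is a constant k with t_n ≤ n^k + k and all these bit sizes ≤ n^k + k). Then the sequence N_n is also bounded above by a polynomial in n (there is a constant k' with N_n ≤ n^{k'} + k' for all n). No bound on the sizes of a_n and b_n is assumed. -/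

import Mathlib

open Polynomial

/-- The bit size of a rational number: the sum of the bit sizes of its numerator and of its
denominator (in lowest terms), where the bit size of a natural number is the number of bits of
its binary representation. -/
def ratBitSize (q : ℚ) : ℕ := Nat.size q.num.natAbs + Nat.size q.den

/-!
Let `f = ∑_{j<s} c_j X^{α_j} u^{β_j}` be nonzero, with `deg u ≤ 1`, and let `ξ` be a root of neither
`X` nor `u`. Pass to a linearly independent subfamily `g_1, …, g_n` (`n ≤ s`) of the terms spanning
the same space; their Wronskian `W` is then nonzero. Replacing a column of `W` by
`f, f', …, f^{(n-1)}` shows that `ξ` is a root of `W` of multiplicity at least `mult_ξ f - n`.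
On the other hand `(Xu)^i g_j^{(i)} = g_j q_{ij}` with `deg q_{ij} ≤ i`, so
`(Xu)^{n(n-1)/2} W = det (q_{ij}) ∏ g_j` and `mult_ξ W ≤ deg det (q_{ij}) ≤ n(n-1)/2`. Hence
`mult_ξ f ≤ s(s+1)/2`.

Now `∏_{i=1}^{N} (X^i - 1)` vanishes to order at least `N/2` at both `1` and `-1`, while
`u = a + bX` vanishes at most at one of them (for `b = 0` take `u = 1` instead), so
`N ≤ (t+1)(t+2) + 1`.
-/

open Matrix

namespace Polynomial

section CommRing

variable {R : Type*} [CommRing R]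

theorem mul_derivative_pow (p : R[X]) (n : ℕ) :
    p * derivative (p ^ n) = C (n : R) * p ^ n * derivative p := by
  cases n with
  | zero => simp
  | succ n => rw [derivative_pow_succ, pow_succ, Nat.cast_succ]; ring

theorem exists_pow_mul_iterate_derivative_eq_mul {w g A : R[X]} (hw : w.natDegree ≤ 2)
    (hA : A.natDegree ≤ 1) (hg : w * derivative g = g * A) (i : ℕ) :
    ∃ q : R[X], q.natDegree ≤ i ∧ w ^ i * derivative^[i] g = g * q := by
  induction i with
  | zero => exact ⟨1, by simp⟩
  | succ i ih =>
    obtain ⟨q, hq, hwq⟩ := ih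
    refine ⟨A * q + w * derivative q - C (i : R) * derivative w * q, ?_, ?_⟩
    · have hwq' : (w * derivative q).natDegree ≤ i + 1 := by
        rcases Nat.eq_zero_or_pos i with rfl | hi
        · rw [derivative_of_natDegree_zero (Nat.le_zero.mp hq), mul_zero, natDegree_zero]
          exact Nat.zero_le _
        · have := natDegree_derivative_le q
          exact natDegree_mul_le.trans (by omega)
      have hw' := natDegree_derivative_le w
      refine (natDegree_sub_le _ _).trans (max_le ((natDegree_add_le _ _).trans
        (max_le (natDegree_mul_le.trans (by omega)) hwq')) ?_)
      refine natDegree_mul_le.trans ?_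
      have := natDegree_C_mul_le (i : R) (derivative w)
      omega
    · have hder := congrArg (w * derivative ·) hwq
      simp only [derivative_mul, mul_add, ← mul_assoc, mul_derivative_pow, hg] at hder
      rw [Function.iterate_succ_apply', pow_succ]
      linear_combination hder - C (i : R) * derivative w * hwq

theorem exists_pow_mul_iterate_derivative_X_pow_mul_pow {u : R[X]} (hu : u.natDegree ≤ 1)
    (α β i : ℕ) : ∃ q : R[X], q.natDegree ≤ i ∧
      (X * u) ^ i * derivative^[i] (X ^ α * u ^ β) = X ^ α * u ^ β * q := by
  refine exists_pow_mul_iterate_derivative_eq_mul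
    (A := C (α : R) * u + C (β : R) * X * derivative u)
    (natDegree_mul_le.trans ?_) ?_ ?_ i
  · have := natDegree_X_le (R := R)
    omega
  · have hu' : (derivative u).natDegree ≤ 0 := (natDegree_derivative_le u).trans (by omega)
    refine (natDegree_add_le _ _).trans (max_le ((natDegree_C_mul_le _ _).trans hu) ?_)
    refine natDegree_mul_le.trans ?_
    have := (natDegree_C_mul_le (β : R) X).trans natDegree_X_le
    omega
  · have hX := mul_derivative_pow (X : R[X]) α
    have hu := mul_derivative_pow u β
    rw [derivative_X, mul_one] at hX
    rw [derivative_mul]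
    linear_combination u * u ^ β * hX + X * X ^ α * hu

theorem sum_iterate_derivative_mul_wronskian_eq_zero {ι : Type*} [Fintype ι] {g v : ι → R[X]}
    {i : ℕ} (h₀ : ∑ j, derivative^[i] (g j) * v j = 0)
    (h₁ : ∑ j, derivative^[i + 1] (g j) * v j = 0) (p : R[X]) :
    ∑ j, derivative^[i] (g j) * wronskian p (v j) = 0 := by
  have hder := congrArg derivative h₀
  simp only [derivative_sum, derivative_mul, Finset.sum_add_distrib, map_zero,
    ← Function.iterate_succ_apply' derivative, h₁, zero_add] at hder
  calc ∑ j, derivative^[i] (g j) * wronskian p (v j)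
      = p * ∑ j, derivative^[i] (g j) * derivative (v j)
        - derivative p * ∑ j, derivative^[i] (g j) * v j := by
        simp only [wronskian, Finset.mul_sum, ← Finset.sum_sub_distrib]
        exact Finset.sum_congr rfl fun j _ => by ring
    _ = 0 := by rw [hder, h₀, mul_zero, mul_zero, sub_zero]

theorem natDegree_det_le_of_natDegree_le {ι : Type*} [Fintype ι] [DecidableEq ι]
    {M : Matrix ι ι R[X]} {d : ι → ℕ} (h : ∀ i j, (M i j).natDegree ≤ d i) :
    M.det.natDegree ≤ ∑ i, d i := by
  rw [det_apply]
  refine natDegree_sum_le_of_forall_le _ _ fun σ _ => ?_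
  calc (Equiv.Perm.sign σ • ∏ i, M (σ i) i).natDegree
      ≤ (∏ i, M (σ i) i).natDegree := by
        rw [Units.smul_def, zsmul_eq_mul]
        exact natDegree_mul_le.trans (by rw [natDegree_intCast, zero_add])
    _ ≤ ∑ i, (M (σ i) i).natDegree := natDegree_prod_le _ _
    _ ≤ ∑ i, d (σ i) := Finset.sum_le_sum fun i _ => h _ _
    _ = ∑ i, d i := Equiv.sum_comp σ d

section IsDomain

variable [IsDomain R]

theorem rootMultiplicity_le_natDegree (p : R[X]) (a : R) : rootMultiplicity a p ≤ p.natDegree := by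
  classical
  exact (count_roots p).symm.le.trans ((Multiset.count_le_card _ _).trans (card_roots' p))

theorem rootMultiplicity_mul_of_eval_ne_zero {p q : R[X]} {a : R} (hp : p.eval a ≠ 0) :
    rootMultiplicity a (p * q) = rootMultiplicity a q := by
  rcases eq_or_ne q 0 with rfl | hq
  · simp
  rw [rootMultiplicity_mul (mul_ne_zero (fun h => hp (by simp [h])) hq),
    rootMultiplicity_eq_zero hp, zero_add]

end IsDomain

end CommRing

section Wronskian

noncomputable def wronskianMatrix {R : Type*} [CommRing R] {n : ℕ} (g : Fin n → R[X]) :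
    Matrix (Fin n) (Fin n) R[X] :=
  Matrix.of fun i j => derivative^[i] (g j)

theorem rootMultiplicity_det_wronskianMatrix_le {R : Type*} [CommRing R] [IsDomain R] {n : ℕ}
    {g : Fin n → R[X]} {w : R[X]} {ξ : R} (hw : w.eval ξ ≠ 0) (hgξ : ∀ j, (g j).eval ξ ≠ 0)
    (hgw : ∀ j (i : ℕ), ∃ q : R[X], q.natDegree ≤ i ∧ w ^ i * derivative^[i] (g j) = g j * q) :
    rootMultiplicity ξ (wronskianMatrix g).det ≤ ∑ i : Fin n, (i : ℕ) := by
  choose q hqdeg hq using hgw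
  have hmat : diagonal (fun i : Fin n => w ^ (i : ℕ)) * wronskianMatrix g =
      Matrix.of (fun (i : Fin n) j => q j i) * diagonal g := by
    ext i j
    simp only [diagonal_mul, mul_diagonal, wronskianMatrix, Matrix.of_apply, hq, mul_comm]
  have hdet := congrArg det hmat
  rw [det_mul, det_mul, det_diagonal, det_diagonal, Finset.prod_pow_eq_pow_sum,
    mul_comm _ (∏ j, g j)] at hdet
  calc rootMultiplicity ξ (wronskianMatrix g).det
      = rootMultiplicity ξ (w ^ (∑ i : Fin n, (i : ℕ)) * (wronskianMatrix g).det) :=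
        (rootMultiplicity_mul_of_eval_ne_zero (by rw [eval_pow]; exact pow_ne_zero _ hw)).symm
    _ = rootMultiplicity ξ (Matrix.of (fun (i : Fin n) j => q j i)).det := by
        rw [hdet, rootMultiplicity_mul_of_eval_ne_zero
          (by simpa [eval_prod] using Finset.prod_ne_zero_iff.mpr fun j _ => hgξ j)]
    _ ≤ (Matrix.of (fun (i : Fin n) j => q j i)).det.natDegree := rootMultiplicity_le_natDegree _ _
    _ ≤ ∑ i : Fin n, (i : ℕ) := natDegree_det_le_of_natDegree_le fun i j => hqdeg j i

variable {K : Type*} [Field K] [CharZero K]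

theorem exists_eq_C_mul_of_wronskian_eq_zero {p q : K[X]} (hq : q ≠ 0) (h : wronskian q p = 0) :
    ∃ c : K, p = C c * q := by
  classical
  obtain ⟨p₁, q₁, hp, hq', hunit⟩ := extract_gcd p q
  generalize gcd p q = d at hp hq'
  subst hp hq'
  have hd : d ≠ 0 := left_ne_zero_of_mul hq
  have h₁ : wronskian p₁ q₁ = 0 := by
    refine mul_left_cancel₀ (mul_ne_zero hd hd) ?_
    simp only [wronskian, derivative_mul] at h ⊢
    linear_combination -h
  obtain ⟨hp₁, hq₁⟩ := ((gcd_isUnit_iff _ _).mp hunit).wronskian_eq_zero_iff.mp h₁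
  rw [eq_C_of_derivative_eq_zero hq₁] at hq ⊢
  rw [eq_C_of_derivative_eq_zero hp₁]
  have : q₁.coeff 0 ≠ 0 := by rintro h; simp [h] at hq
  refine ⟨p₁.coeff 0 / q₁.coeff 0, ?_⟩
  rw [← mul_assoc, mul_comm (C _) d, mul_assoc, ← C_mul, div_mul_cancel₀ _ this]

theorem eq_zero_of_wronskianMatrix_mulVec_eq_zero {n : ℕ} {g : Fin n → K[X]}
    (hg : LinearIndependent K g) {v : Fin n → K[X]} (hv : wronskianMatrix g *ᵥ v = 0) :
    v = 0 := by
  induction n with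
  | zero => exact Subsingleton.elim _ _
  | succ n ih =>
    by_contra hv₀
    obtain ⟨j₀, hj₀⟩ := Function.ne_iff.mp hv₀
    have hrow (i : ℕ) (hi : i < n + 1) : ∑ j, derivative^[i] (g j) * v j = 0 :=
      congrFun hv ⟨i, hi⟩
    -- `wronskian (v j₀) (v j)` is the numerator of `(v j / v j₀)'`
    have hr (j : Fin (n + 1)) : wronskian (v j₀) (v j) = 0 := by
      obtain rfl | ⟨k, rfl⟩ := Fin.eq_self_or_eq_succAbove j₀ j
      · exact wronskian_self_eq_zero _
      have hsub := ih (v := fun k => wronskian (v j₀) (v (j₀.succAbove k)))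
        (hg.comp j₀.succAbove Fin.succAbove_right_injective) <| by
          funext i
          have hfull := sum_iterate_derivative_mul_wronskian_eq_zero (hrow i (by omega))
            (hrow (i + 1) (by omega)) (v j₀)
          rwa [Fin.sum_univ_succAbove _ j₀, wronskian_self_eq_zero, mul_zero, zero_add] at hfull
      exact congrFun hsub k
    choose c hc using fun j => exists_eq_C_mul_of_wronskian_eq_zero hj₀ (hr j)
    have hc₀ : ∑ j, c j • g j = 0 := by
      have hmul : (∑ j, c j • g j) * v j₀ = 0 := by
        rw [← hrow 0 n.succ_pos, Finset.sum_mul]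
        refine Finset.sum_congr rfl fun j _ => ?_
        rw [hc j, smul_eq_C_mul, Function.iterate_zero, id, mul_left_comm, mul_assoc]
      exact (mul_eq_zero.mp hmul).resolve_right hj₀
    have := hc j₀
    rw [Fintype.linearIndependent_iff.mp hg c hc₀ j₀, C_0, zero_mul] at this
    exact hj₀ this

theorem det_wronskianMatrix_ne_zero {n : ℕ} {g : Fin n → K[X]} (hg : LinearIndependent K g) :
    (wronskianMatrix g).det ≠ 0 := fun h =>
  let ⟨_, hv₀, hv⟩ := Matrix.exists_mulVec_eq_zero_iff.mpr h
  hv₀ (eq_zero_of_wronskianMatrix_mulVec_eq_zero hg hv)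

theorem rootMultiplicity_le_rootMultiplicity_det_wronskianMatrix_add {n : ℕ} {g : Fin n → K[X]}
    (hg : LinearIndependent K g) {f : K[X]} (hf₀ : f ≠ 0)
    (hf : f ∈ Submodule.span K (Set.range g)) (ξ : K) :
    rootMultiplicity ξ f ≤ rootMultiplicity ξ (wronskianMatrix g).det + n := by
  obtain ⟨c, rfl⟩ := (Submodule.mem_span_range_iff_exists_fun K).mp hf
  obtain ⟨j₀, hj₀⟩ : ∃ j₀, c j₀ ≠ 0 := by
    by_contra! h
    simp [h] at hf₀
  set m := rootMultiplicity ξ (∑ j, c j • g j)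
  choose q hq using fun i : Fin n => (pow_dvd_pow (X - C ξ) (by omega : m - n ≤ m - i)).trans
    (pow_sub_dvd_iterate_derivative_of_pow_dvd i (pow_rootMultiplicity_dvd _ ξ))
  have hcol : (X - C ξ) ^ (m - n) • q = fun i => ∑ j, C (c j) • wronskianMatrix g i j := by
    funext i
    simp only [Pi.smul_apply, smul_eq_mul, ← hq i, iterate_derivative_sum,
      smul_eq_C_mul, iterate_derivative_C_mul, wronskianMatrix, Matrix.of_apply]
  have hdvd : (X - C ξ) ^ (m - n) ∣ C (c j₀) * (wronskianMatrix g).det :=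
    ⟨_, by rw [← smul_eq_mul, ← Matrix.det_updateCol_sum _ j₀ fun j => C (c j), ← hcol,
      Matrix.det_updateCol_smul]⟩
  rw [(isUnit_C.mpr hj₀.isUnit).dvd_mul_left,
    ← le_rootMultiplicity_iff (det_wronskianMatrix_ne_zero hg)] at hdvd
  omega

end Wronskian

section RootMultiplicityBound

variable {K : Type*} [Field K] [CharZero K]

theorem two_mul_rootMultiplicity_le_of_mem_span {ι : Type*} [Fintype ι] {v : ι → K[X]}
    {w : K[X]} {ξ : K} (hw : w.eval ξ ≠ 0) (hvξ : ∀ j, (v j).eval ξ ≠ 0)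
    (hvw : ∀ j (i : ℕ), ∃ q : K[X], q.natDegree ≤ i ∧ w ^ i * derivative^[i] (v j) = v j * q)
    {f : K[X]} (hf₀ : f ≠ 0) (hf : f ∈ Submodule.span K (Set.range v)) :
    2 * rootMultiplicity ξ f ≤ Fintype.card ι * (Fintype.card ι + 1) := by
  obtain ⟨κ, a, ha, hspan, hli⟩ := exists_linearIndependent' K v
  have : Finite κ := Finite.of_injective a ha
  set e := Finite.equivFin κ
  have hcard : Nat.card κ ≤ Fintype.card ι :=
    (Nat.card_le_card_of_injective a ha).trans_eq Nat.card_eq_fintype_card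
  have hf' : f ∈ Submodule.span K (Set.range (v ∘ a ∘ e.symm)) := by
    rwa [← Function.comp_assoc, EquivLike.range_comp, hspan]
  have hmult := rootMultiplicity_le_rootMultiplicity_det_wronskianMatrix_add
    (hli.comp _ e.symm.injective) hf₀ hf' ξ
  have hdet := rootMultiplicity_det_wronskianMatrix_le (g := (v ∘ a) ∘ e.symm) hw
    (fun j => hvξ _) (fun j => hvw _)
  have hsum (n : ℕ) : 2 * ∑ i : Fin n, (i : ℕ) + 2 * n = n * (n + 1) := by
    rw [Fin.sum_univ_eq_sum_range (fun i => i) n, mul_comm 2, Finset.sum_range_id_mul_two]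
    rcases n with _ | n
    · rfl
    · rw [Nat.add_sub_cancel]; ring
  calc 2 * rootMultiplicity ξ f ≤ Nat.card κ * (Nat.card κ + 1) := by
        have := hsum (Nat.card κ)
        omega
    _ ≤ Fintype.card ι * (Fintype.card ι + 1) := Nat.mul_le_mul hcard (by omega)

theorem two_mul_rootMultiplicity_le_of_mem_span_X_pow_mul_pow {ι : Type*} [Fintype ι]
    {u : K[X]} (hu : u.natDegree ≤ 1) {ξ : K} (hξ : (X * u).eval ξ ≠ 0) (α β : ι → ℕ)
    {f : K[X]} (hf₀ : f ≠ 0) (hf : f ∈ Submodule.span K (Set.range fun j => X ^ α j * u ^ β j)) :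
    2 * rootMultiplicity ξ f ≤ Fintype.card ι * (Fintype.card ι + 1) := by
  rw [eval_mul, eval_X] at hξ
  refine two_mul_rootMultiplicity_le_of_mem_span (w := X * u) (by rwa [eval_mul, eval_X])
    (fun j => ?_) (fun j => exists_pow_mul_iterate_derivative_X_pow_mul_pow hu (α j) (β j)) hf₀ hf
  rw [eval_mul, eval_pow, eval_pow, eval_X]
  exact mul_ne_zero (pow_ne_zero _ (left_ne_zero_of_mul hξ))
    (pow_ne_zero _ (right_ne_zero_of_mul hξ))

end RootMultiplicityBound

section ProdXPowSubOne

variable {R : Type*} [CommRing R]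

theorem pow_div_dvd_prod_X_pow_sub_one {ξ : R} {d : ℕ} (hd : 0 < d) (hξ : ξ ^ d = 1) (N : ℕ) :
    (X - C ξ) ^ (N / d) ∣ ∏ i ∈ Finset.Icc 1 N, (X ^ i - 1 : R[X]) := by
  have hsub : (Finset.Icc 1 (N / d)).image (d * ·) ⊆ Finset.Icc 1 N := by
    intro i hi
    obtain ⟨k, hk, rfl⟩ := Finset.mem_image.mp hi
    rw [Finset.mem_Icc] at hk ⊢
    exact ⟨Nat.mul_pos hd hk.1,
      (Nat.mul_le_mul_left d hk.2).trans (Nat.mul_div_le N d)⟩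
  calc (X - C ξ) ^ (N / d) = ∏ _k ∈ Finset.Icc 1 (N / d), (X - C ξ) := by
        rw [Finset.prod_const, Nat.card_Icc, Nat.add_sub_cancel]
    _ ∣ ∏ k ∈ Finset.Icc 1 (N / d), (X ^ (d * k) - 1 : R[X]) :=
        Finset.prod_dvd_prod_of_dvd _ _ fun k _ => dvd_iff_isRoot.mpr (by simp [pow_mul, hξ])
    _ = ∏ i ∈ (Finset.Icc 1 (N / d)).image (d * ·), (X ^ i - 1 : R[X]) :=
        (Finset.prod_image (f := fun i => (X ^ i - 1 : R[X]))
          fun _ _ _ _ h => Nat.eq_of_mul_eq_mul_left hd h).symm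
    _ ∣ ∏ i ∈ Finset.Icc 1 N, (X ^ i - 1 : R[X]) := Finset.prod_dvd_prod_of_subset _ _ _ hsub

variable [IsDomain R]

theorem prod_X_pow_sub_one_ne_zero (N : ℕ) : ∏ i ∈ Finset.Icc 1 N, (X ^ i - 1 : R[X]) ≠ 0 :=
  Finset.prod_ne_zero_iff.mpr fun i hi => by
    simpa using X_pow_sub_C_ne_zero (Finset.mem_Icc.mp hi).1 (1 : R)

theorem div_le_rootMultiplicity_prod_X_pow_sub_one {ξ : R} {d : ℕ} (hd : 0 < d) (hξ : ξ ^ d = 1)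
    (N : ℕ) : N / d ≤ rootMultiplicity ξ (∏ i ∈ Finset.Icc 1 N, (X ^ i - 1 : R[X])) :=
  (le_rootMultiplicity_iff (prod_X_pow_sub_one_ne_zero N)).mpr
    (pow_div_dvd_prod_X_pow_sub_one hd hξ N)

end ProdXPowSubOne

section Application

variable {K : Type*} [Field K] [CharZero K]

theorem exists_sq_eq_one_eval_X_mul_ne_zero (a b : K) :
    ∃ (ξ : K) (u : K[X]), ξ ^ 2 = 1 ∧ u.natDegree ≤ 1 ∧ (X * u).eval ξ ≠ 0 ∧
      ∀ β : ℕ, ∃ e : K, (C a + C b * X) ^ β = C e * u ^ β := by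
  rcases eq_or_ne b 0 with rfl | hb
  · exact ⟨1, 1, one_pow 2, by simp, by simp, fun β => ⟨a ^ β, by simp⟩⟩
  have hu : (C a + C b * X).natDegree ≤ 1 := by compute_degree!
  have hpow (β : ℕ) : ∃ e : K, (C a + C b * X) ^ β = C e * (C a + C b * X) ^ β := ⟨1, by simp⟩
  rcases eq_or_ne (a + b) 0 with hab | hab
  · refine ⟨-1, _, by norm_num, hu, ?_, hpow⟩
    simp only [eval_mul, eval_X, eval_add, eval_C]
    exact fun h => hb (by linear_combination (h + hab) / 2)
  · exact ⟨1, _, one_pow 2, hu, by simpa using hab, hpow⟩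

theorem le_of_prod_X_pow_sub_one_eq_sum {ι : Type*} [Fintype ι] {N : ℕ} {c : ι → K}
    {α β : ι → ℕ} {a b : K}
    (h : ∏ i ∈ Finset.Icc 1 N, (X ^ i - 1 : K[X]) =
      ∑ j, C (c j) * X ^ α j * (C a + C b * X) ^ β j) :
    N ≤ Fintype.card ι * (Fintype.card ι + 1) + 1 := by
  obtain ⟨ξ, u, hξ₂, hu, hξ, hpow⟩ := exists_sq_eq_one_eval_X_mul_ne_zero a b
  choose e he using hpow
  have hmem : ∏ i ∈ Finset.Icc 1 N, (X ^ i - 1 : K[X]) ∈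
      Submodule.span K (Set.range fun j => X ^ α j * u ^ β j) := by
    rw [h]
    refine Submodule.sum_mem _ fun j _ => ?_
    have : C (c j) * X ^ α j * (C a + C b * X) ^ β j = (c j * e (β j)) • (X ^ α j * u ^ β j) := by
      rw [he, smul_eq_C_mul, C_mul]
      ring
    exact this ▸ Submodule.smul_mem _ _ (Submodule.subset_span ⟨j, rfl⟩)
  have hlow := div_le_rootMultiplicity_prod_X_pow_sub_one two_pos hξ₂ N
  have hup := two_mul_rootMultiplicity_le_of_mem_span_X_pow_mul_pow hu hξ α β
    (prod_X_pow_sub_one_ne_zero N) hmem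
  omega

end Application

end Polynomial

theorem le_pow_add_self_of_le_succ_mul_succ_add_one {k n t N : ℕ} (ht : t ≤ n ^ k + k)
    (hN : N ≤ (t + 1) * (t + 2) + 1) : N ≤ n ^ (2 * (k + 3) ^ 2) + 2 * (k + 3) ^ 2 := by
  rcases Nat.lt_or_ge n 2 with hn | hn
  · have : n ^ k ≤ 1 := pow_le_one₀ (Nat.zero_le n) (by omega)
    calc N ≤ (k + 2) * (k + 3) + 1 :=
          hN.trans (Nat.add_le_add_right (Nat.mul_le_mul (by omega) (by omega)) 1)
      _ ≤ 2 * (k + 3) ^ 2 := by nlinarith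
      _ ≤ _ := Nat.le_add_left _ _
  · have hk : k + 1 ≤ n ^ (k + 1) := (Nat.lt_pow_self hn).le
    have hpow : n ^ k ≤ n ^ (k + 1) := Nat.pow_le_pow_right (by omega) k.le_succ
    have ht' : t + 1 ≤ n ^ (k + 2) := by
      rw [pow_succ]
      nlinarith
    calc N ≤ 3 * (n ^ (k + 2)) ^ 2 := by nlinarith
      _ ≤ n ^ 2 * (n ^ (k + 2)) ^ 2 := by gcongr; nlinarith
      _ = n ^ (2 * k + 6) := by ring
      _ ≤ n ^ (2 * (k + 3) ^ 2) := Nat.pow_le_pow_right (by omega) (by nlinarith)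
      _ ≤ _ := Nat.le_add_right _ _

theorem stmt11_general (N : ℕ → ℕ)
    (hrep : ∃ k : ℕ, ∀ n : ℕ,
      ∃ (t : ℕ) (c : Fin (t + 1) → ℚ) (α β : Fin (t + 1) → ℕ) (a b : ℚ),
        t ≤ n ^ k + k ∧
        (∀ j, ratBitSize (c j) ≤ n ^ k + k) ∧
        (∀ j, Nat.size (α j) ≤ n ^ k + k) ∧
        (∀ j, Nat.size (β j) ≤ n ^ k + k) ∧
        (∏ i ∈ Finset.Icc 1 (N n), (X ^ i - 1) : ℚ[X]) =
          ∑ j, Polynomial.C (c j) * X ^ α j *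
            (Polynomial.C a + Polynomial.C b * X) ^ β j) :
    ∃ k' : ℕ, ∀ n : ℕ, N n ≤ n ^ k' + k' := by
  obtain ⟨k, hk⟩ := hrep
  refine ⟨2 * (k + 3) ^ 2, fun n => ?_⟩
  obtain ⟨t, c, α, β, a, b, ht, -, -, -, h⟩ := hk n
  have hN := le_of_prod_X_pow_sub_one_eq_sum h
  rw [Fintype.card_fin] at hN
  exact le_pow_add_self_of_le_succ_mul_succ_add_one ht hN

/-- Let `P_n = ∏_{i=1}^{N_n} (X^i − 1)`. Suppose that for every `n` the polynomial `P_n` can be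
written as `∑_{j=0}^{t_n} c_j X^{α_j}(a_n + b_n X)^{β_j}` with rational `a_n, b_n, c_j`, where
`t_n` and the bit sizes of all the `c_j`, `α_j`, `β_j` are bounded by a polynomial in `n`
(no bound being assumed on `a_n` and `b_n`). Then `N_n` is bounded by a polynomial in `n`. -/
theorem stmt11 (N : ℕ → ℕ) (hN : ∀ n, 0 < N n)
    (hrep : ∃ k : ℕ, ∀ n : ℕ,
      ∃ (t : ℕ) (c : Fin (t + 1) → ℚ) (α β : Fin (t + 1) → ℕ) (a b : ℚ),
        t ≤ n ^ k + k ∧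
        (∀ j, ratBitSize (c j) ≤ n ^ k + k) ∧
        (∀ j, Nat.size (α j) ≤ n ^ k + k) ∧
        (∀ j, Nat.size (β j) ≤ n ^ k + k) ∧
        (∏ i ∈ Finset.Icc 1 (N n), (X ^ i - 1) : ℚ[X]) =
          ∑ j, Polynomial.C (c j) * X ^ α j *
            (Polynomial.C a + Polynomial.C b * X) ^ β j) :
    ∃ k' : ℕ, ∀ n : ℕ, N n ≤ n ^ k' + k' :=
  stmt11_general N hrep
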